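/- Let C : ℝ^d → ℝ be differentiable with L-Lipschitz gradient for some L > 0, let q_0, …, q_{t−1} ∈ ℝ^d be data points, and let α, β ∈ ℝ with β > 0 ≥ α. For each pair (i, j) with 0 ≤ i, j ≤ t−1, define the quadratic function Q_{ij}(s) = (L(α−β)/2)‖s‖² + α·(ℓ(s; C, q_i) − L·(q_i·s − ‖q_i‖²/2)) + β·(ℓ(s; C, q_j) + L·(q_j·s − ‖q_j‖²/2)). Then each Q_{ij} is concave and m_{t,α,β}(s) = max_{0≤i,j≤t−1} Q_{ij}(s) for all s ∈ ℝ^d; in particular, m_{t,α,β} is the pointwise maximum of at most t² concave quadratic functions. -/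

import Mathlib

variable {E : Type*} [NormedAddCommGroup E] [InnerProductSpace ℝ E]

lemma convexOn_normSq' : ConvexOn ℝ Set.univ (fun s : E => ‖s‖ ^ 2) := by
  refine ⟨convex_univ, ?_⟩
  intro x _ y _ a b ha hb hab
  have h := norm_add_le (a • x) (b • y)
  simp only [norm_smul, Real.norm_eq_abs, abs_of_nonneg ha, abs_of_nonneg hb] at h
  have h2 : ‖a • x + b • y‖ ^ 2 ≤ (a * ‖x‖ + b * ‖y‖) ^ 2 := by
    have := norm_nonneg (a • x + b • y)
    nlinarith
  simp only [smul_eq_mul]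
  nlinarith [sq_nonneg (‖x‖ - ‖y‖), mul_nonneg ha hb]

lemma concaveOn_quadAux (c : ℝ) (hc : c ≤ 0) (v : E) (k : ℝ) :
    ConcaveOn ℝ Set.univ (fun s : E => c * ‖s‖ ^ 2 + ((inner ℝ v s : ℝ) + k)) := by
  have h1 : ConcaveOn ℝ Set.univ (fun s : E => c * ‖s‖ ^ 2) := by
    have := (convexOn_normSq' (E := E)).neg.smul (c := -c) (by linarith)
    refine this.congr fun s _ => ?_
    simp only [Pi.smul_apply, Pi.neg_apply, smul_eq_mul]
    ring
  have h2 : ConcaveOn ℝ Set.univ (fun s : E => (inner ℝ v s : ℝ) + k) := by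
    refine ⟨convex_univ, ?_⟩
    intro x _ y _ a b ha hb hab
    apply le_of_eq
    simp only [smul_eq_mul, inner_add_right, real_inner_smul_right]
    linear_combination k * hab
  exact h1.add h2


/-- Linear approximant `ℓ(s; C, q) = C(q) + ∇C(q)·(s − q)`. -/
noncomputable def lapprox {d : ℕ} (C : EuclideanSpace ℝ (Fin d) → ℝ)
    (q s : EuclideanSpace ℝ (Fin d)) : ℝ :=
  C q + inner ℝ (gradient C q) (s - q)

/-- Data-driven majorant `C_{t−1}^+(s)` built from data points `q_0, …, q_{t−1}`. -/
noncomputable def ddMajorant {d t : ℕ} (ht : 0 < t) (C : EuclideanSpace ℝ (Fin d) → ℝ)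
    (L : ℝ) (q : Fin t → EuclideanSpace ℝ (Fin d)) (s : EuclideanSpace ℝ (Fin d)) : ℝ :=
  Finset.univ.inf' (Finset.univ_nonempty_iff.mpr (Fin.pos_iff_nonempty.mp ht))
    fun i => lapprox C (q i) s + L / 2 * ‖s - q i‖ ^ 2

/-- Data-driven minorant `C_{t−1}^-(s)` built from data points `q_0, …, q_{t−1}`. -/
noncomputable def ddMinorant {d t : ℕ} (ht : 0 < t) (C : EuclideanSpace ℝ (Fin d) → ℝ)
    (L : ℝ) (q : Fin t → EuclideanSpace ℝ (Fin d)) (s : EuclideanSpace ℝ (Fin d)) : ℝ :=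
  Finset.univ.sup' (Finset.univ_nonempty_iff.mpr (Fin.pos_iff_nonempty.mp ht))
    fun i => lapprox C (q i) s - L / 2 * ‖s - q i‖ ^ 2

/-- Surrogate `m_{t,α,β}(s) = α·C_{t−1}^+(s) + β·C_{t−1}^-(s)`. -/
noncomputable def surrogate {d t : ℕ} (ht : 0 < t) (C : EuclideanSpace ℝ (Fin d) → ℝ)
    (L α β : ℝ) (q : Fin t → EuclideanSpace ℝ (Fin d)) (s : EuclideanSpace ℝ (Fin d)) : ℝ :=
  α * ddMajorant ht C L q s + β * ddMinorant ht C L q s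

/-- The quadratic function
`Q_{ij}(s) = (L(α−β)/2)‖s‖² + α(ℓ(s;C,q_i) − L(q_i·s − ‖q_i‖²/2)) + β(ℓ(s;C,q_j) + L(q_j·s − ‖q_j‖²/2))`. -/
noncomputable def quadPiece {d t : ℕ} (C : EuclideanSpace ℝ (Fin d) → ℝ) (L α β : ℝ)
    (q : Fin t → EuclideanSpace ℝ (Fin d)) (i j : Fin t) (s : EuclideanSpace ℝ (Fin d)) : ℝ :=
  L * (α - β) / 2 * ‖s‖ ^ 2
    + α * (lapprox C (q i) s - L * ((inner ℝ (q i) s : ℝ) - ‖q i‖ ^ 2 / 2))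
    + β * (lapprox C (q j) s + L * ((inner ℝ (q j) s : ℝ) - ‖q j‖ ^ 2 / 2))

lemma quadPiece_eq {d t : ℕ} (C : EuclideanSpace ℝ (Fin d) → ℝ) (L α β : ℝ)
    (q : Fin t → EuclideanSpace ℝ (Fin d)) (i j : Fin t) (s : EuclideanSpace ℝ (Fin d)) :
    quadPiece C L α β q i j s
      = α * (lapprox C (q i) s + L / 2 * ‖s - q i‖ ^ 2)
        + β * (lapprox C (q j) s - L / 2 * ‖s - q j‖ ^ 2) := by
  simp only [quadPiece, norm_sub_sq_real, real_inner_comm s]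
  ring

/-- For `β > 0 ≥ α`, each `Q_{ij}` is concave and the surrogate `m_{t,α,β}` is the pointwise
maximum of the (at most `t²`) concave quadratics `Q_{ij}`. -/
theorem surrogate_eq_max_concave_quadratics {d t : ℕ} (ht : 0 < t)
    (C : EuclideanSpace ℝ (Fin d) → ℝ) (L : ℝ) (hL : 0 < L)
    (hdiff : Differentiable ℝ C)
    (hlip : ∀ x y, ‖gradient C y - gradient C x‖ ≤ L * ‖y - x‖)
    (q : Fin t → EuclideanSpace ℝ (Fin d)) (α β : ℝ) (hβ : 0 < β) (hα : α ≤ 0) :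
    (∀ i j : Fin t, ConcaveOn ℝ Set.univ (quadPiece C L α β q i j)) ∧
    (∀ s, surrogate ht C L α β q s
      = Finset.univ.sup' (Finset.univ_nonempty_iff.mpr ⟨(⟨0, ht⟩, ⟨0, ht⟩)⟩)
        (fun p : Fin t × Fin t => quadPiece C L α β q p.1 p.2 s)) := by
  constructor
  · intro i j
    have hc : L * (α - β) / 2 ≤ 0 := by nlinarith
    have := concaveOn_quadAux (L * (α - β) / 2) hc
      (α • gradient C (q i) + β • gradient C (q j) + (β * L) • q j - (α * L) • q i)
      (α * (C (q i) - (inner ℝ (gradient C (q i)) (q i) : ℝ) + L * ‖q i‖ ^ 2 / 2)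
        + β * (C (q j) - (inner ℝ (gradient C (q j)) (q j) : ℝ) - L * ‖q j‖ ^ 2 / 2))
    refine this.congr fun s _ => ?_
    simp only [quadPiece, lapprox, inner_add_left, inner_sub_left, real_inner_smul_left,
      inner_sub_right]
    ring
  · intro s
    have hne : (Finset.univ : Finset (Fin t)).Nonempty :=
      Finset.univ_nonempty_iff.mpr (Fin.pos_iff_nonempty.mp ht)
    obtain ⟨i0, -, hi0⟩ := Finset.exists_mem_eq_inf' hne
      fun i => lapprox C (q i) s + L / 2 * ‖s - q i‖ ^ 2
    obtain ⟨j0, -, hj0⟩ := Finset.exists_mem_eq_sup' hne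
      fun i => lapprox C (q i) s - L / 2 * ‖s - q i‖ ^ 2
    apply le_antisymm
    · calc surrogate ht C L α β q s
          = quadPiece C L α β q i0 j0 s := by
            rw [quadPiece_eq, surrogate, ddMajorant, ddMinorant, hi0, hj0]
        _ ≤ _ := by
            exact Finset.le_sup' (fun p : Fin t × Fin t => quadPiece C L α β q p.1 p.2 s)
              (Finset.mem_univ (i0, j0))
    · refine Finset.sup'_le _ (fun p : Fin t × Fin t => quadPiece C L α β q p.1 p.2 s) fun p _ => ?_
      show quadPiece C L α β q p.1 p.2 s ≤ surrogate ht C L α β q s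
      rw [quadPiece_eq, surrogate, ddMajorant, ddMinorant]
      have h1 : (Finset.univ.inf' hne fun i => lapprox C (q i) s + L / 2 * ‖s - q i‖ ^ 2)
          ≤ lapprox C (q p.1) s + L / 2 * ‖s - q p.1‖ ^ 2 :=
        Finset.inf'_le (fun i => lapprox C (q i) s + L / 2 * ‖s - q i‖ ^ 2) (Finset.mem_univ p.1)
      have h2 : lapprox C (q p.2) s - L / 2 * ‖s - q p.2‖ ^ 2
          ≤ Finset.univ.sup' hne fun i => lapprox C (q i) s - L / 2 * ‖s - q i‖ ^ 2 :=
        Finset.le_sup' (fun i => lapprox C (q i) s - L / 2 * ‖s - q i‖ ^ 2) (Finset.mem_univ p.2)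
      exact add_le_add (mul_le_mul_of_nonpos_left h1 hα) (mul_le_mul_of_nonneg_left h2 hβ.le)
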